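/- There exists a universal constant C > 0 with the following property. Let ℓ > 0, let c ∈ ℝ³, let Q₁ be a cube with center c and side length ℓ, and let Q₂, Q₃ ⊂ B_{10ℓ}(c) be cubes of side lengths in [ℓ/4, 4ℓ]. Then for every v ∈ L¹(B_{10ℓ}(c)): ∫_{Q₁} ∫_{Q₂} ∫_{Q₃} ∫_{Sim(x₁,x₂,x₃)} |v(z)| dH²(z) dx₃ dx₂ dx₁ ≤ C·ℓ⁸ ∫_{B_{10ℓ}(c)} |v(z)| dz = C·ℓ¹¹ ⨍_{B_{10ℓ}(c)} |v(z)| dz. -/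

import Mathlib

/-!
Parametrize the triangle with vertices `x₁, x₂, x₃` by `p ↦ (1 - p₀ - p₁) x₁ + p₀ x₂ + p₁ x₃`
on the planar unit triangle. This map is Lipschitz with constant `|x₂ - x₁| + |x₃ - x₁|`, so
the `H²`-integral over the triangle is at most the square of that constant times a planar
integral over the parameter `p`, and all vertices lie in `B = B_{10ℓ}(c)`, so the constant is
at most `40ℓ`. After moving the `p`-integral outside, one of the three barycentric weights is at
least `1/3`; integrating first over the corresponding vertex is then a dilation by that weight,
which costs at most `3³ ∫ |v|`, and the two other vertex integrals cost at most `|B|²`.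
Since `H²` on triangles sees Lebesgue-null sets, `|v|` is first replaced by a measurable
majorant that agrees with it almost everywhere.
-/

open MeasureTheory Metric ENNReal

noncomputable section

local notation "E3" => EuclideanSpace ℝ (Fin 3)

/-- The closed axis-parallel cube with center `c` and side length `l`. -/
def cube (c : E3) (l : ℝ) : Set E3 :=
  {x | ∀ i : Fin 3, |x i - c i| ≤ l / 2}

open Module Real

theorem AEMeasurable.exists_measurable_ge_ae_eq {α : Type*} [MeasurableSpace α] {μ : Measure α}
    {f : α → ℝ≥0∞} (hf : AEMeasurable f μ) :
    ∃ g : α → ℝ≥0∞, Measurable g ∧ f ≤ g ∧ g =ᵐ[μ] f := by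
  classical
  set N := toMeasurable μ {x | f x ≠ hf.mk f x}
  have hN : μ N = 0 := by rw [measure_toMeasurable]; exact hf.ae_eq_mk
  refine ⟨N.piecewise ⊤ (hf.mk f),
    Measurable.piecewise (measurableSet_toMeasurable _ _) measurable_const hf.measurable_mk,
    fun x => ?_, ?_⟩
  · by_cases hx : x ∈ N
    · simp [hx]
    · rw [N.piecewise_eq_of_notMem _ _ hx]
      exact (not_not.1 fun hne => hx (subset_toMeasurable _ _ hne)).le
  · filter_upwards [measure_eq_zero_iff_ae_notMem.1 hN, hf.ae_eq_mk] with x hx hfx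
    rw [N.piecewise_eq_of_notMem _ _ hx, hfx]

theorem IntegrableOn.exists_measurable_ge_lintegral_eq {α : Type*} [MeasurableSpace α]
    {μ : Measure α} {s : Set α} {v : α → ℝ} (hv : IntegrableOn v s μ)
    (hv₀ : ∀ x ∉ s, v x = 0) :
    ∃ F : α → ℝ≥0∞, Measurable F ∧ (∀ x, ENNReal.ofReal |v x| ≤ F x) ∧
      ∫⁻ x, F x ∂μ = ∫⁻ x in s, ENNReal.ofReal |v x| ∂μ := by
  obtain ⟨F, hF, hvF, hFv⟩ := (hv.integrable_of_forall_notMem_eq_zero hv₀).aemeasurable.abs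
    |>.ennreal_ofReal.exists_measurable_ge_ae_eq
  refine ⟨F, hF, hvF, ?_⟩
  rw [lintegral_congr_ae hFv, setLIntegral_eq_of_support_subset]
  intro x hx
  by_contra hxs
  simp [hv₀ x hxs] at hx

section Iterated

variable {α β γ δ : Type*} [MeasurableSpace α] [MeasurableSpace β] [MeasurableSpace γ]
  [MeasurableSpace δ] {μ : Measure α} {ν : Measure β} {ρ : Measure γ} {κ : Measure δ}
  [SFinite μ] [SFinite ν] [SFinite ρ] [SFinite κ]

theorem lintegral_lintegral_lintegral_rotate {g : α × β × γ → ℝ≥0∞} (hg : Measurable g) :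
    ∫⁻ x, ∫⁻ y, ∫⁻ z, g (x, y, z) ∂ρ ∂ν ∂μ = ∫⁻ y, ∫⁻ z, ∫⁻ x, g (x, y, z) ∂μ ∂ρ ∂ν := by
  rw [lintegral_lintegral_swap (Measurable.lintegral_prod_right (by fun_prop)).aemeasurable]
  exact lintegral_congr fun y => lintegral_lintegral_swap (by fun_prop)

theorem lintegral_lintegral_lintegral_lintegral_swap {G : α × β × γ × δ → ℝ≥0∞}
    (hG : Measurable G) :
    ∫⁻ x, ∫⁻ y, ∫⁻ z, ∫⁻ p, G (x, y, z, p) ∂κ ∂ρ ∂ν ∂μ =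
      ∫⁻ p, ∫⁻ x, ∫⁻ y, ∫⁻ z, G (x, y, z, p) ∂ρ ∂ν ∂μ ∂κ := by
  have h₃ : ∀ x y, ∫⁻ z, ∫⁻ p, G (x, y, z, p) ∂κ ∂ρ = ∫⁻ p, ∫⁻ z, G (x, y, z, p) ∂ρ ∂κ :=
    fun x y => lintegral_lintegral_swap (by fun_prop)
  have h₂ : ∀ x, ∫⁻ y, ∫⁻ p, ∫⁻ z, G (x, y, z, p) ∂ρ ∂κ ∂ν =
      ∫⁻ p, ∫⁻ y, ∫⁻ z, G (x, y, z, p) ∂ρ ∂ν ∂κ := fun x =>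
    lintegral_lintegral_swap (Measurable.lintegral_prod_right (by fun_prop)).aemeasurable
  simp_rw [h₃, h₂]
  exact lintegral_lintegral_swap (Measurable.lintegral_prod_right
    (Measurable.lintegral_prod_right (by fun_prop))).aemeasurable

end Iterated

section Haar

variable {E : Type*} [NormedAddCommGroup E] [NormedSpace ℝ E] [FiniteDimensional ℝ E]
  [MeasurableSpace E] [BorelSpace E] (μ : Measure E) [μ.IsAddHaarMeasure]

theorem lintegral_comp_add_smul (F : E → ℝ≥0∞) (a : E) {r : ℝ} (hr : r ≠ 0) :
    ∫⁻ x, F (a + r • x) ∂μ = ENNReal.ofReal |(r ^ finrank ℝ E)⁻¹| * ∫⁻ x, F x ∂μ := by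
  have := lintegral_map_equiv (μ := μ) (fun y => F (a + y))
    (Homeomorph.smulOfNeZero r hr).toMeasurableEquiv
  simp only [Homeomorph.toMeasurableEquiv_coe, Homeomorph.smulOfNeZero_apply] at this
  rw [← this, Measure.map_addHaar_smul μ hr, lintegral_smul_measure, smul_eq_mul,
    lintegral_add_left_eq_self]

theorem setLIntegral_comp_add_smul_le (F : E → ℝ≥0∞) (a : E) {r : ℝ} (hr : 3⁻¹ ≤ r)
    (s : Set E) : ∫⁻ x in s, F (a + r • x) ∂μ ≤ 3 ^ finrank ℝ E * ∫⁻ x, F x ∂μ := by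
  have hr₀ : 0 < r := lt_of_lt_of_le (by norm_num) hr
  calc ∫⁻ x in s, F (a + r • x) ∂μ ≤ ∫⁻ x, F (a + r • x) ∂μ := setLIntegral_le_lintegral _ _
    _ = ENNReal.ofReal |(r ^ finrank ℝ E)⁻¹| * ∫⁻ x, F x ∂μ :=
      lintegral_comp_add_smul μ F a hr₀.ne'
    _ ≤ 3 ^ finrank ℝ E * ∫⁻ x, F x ∂μ := by
      gcongr
      rw [abs_of_pos (by positivity), ← inv_pow, ENNReal.ofReal_pow (by positivity),
        ← ENNReal.ofReal_ofNat]
      gcongr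
      exact inv_le_of_inv_le₀ (by norm_num) hr

theorem lintegral_comp_smul_add_smul_add_smul_le_of_right (F : E → ℝ≥0∞) (a b : ℝ) {c : ℝ}
    (hc : 3⁻¹ ≤ c) (s : Set E) :
    ∫⁻ x₁ in s, ∫⁻ x₂ in s, ∫⁻ x₃ in s, F (a • x₁ + b • x₂ + c • x₃) ∂μ ∂μ ∂μ ≤
      3 ^ finrank ℝ E * (∫⁻ x, F x ∂μ) * μ s ^ 2 := by
  calc ∫⁻ x₁ in s, ∫⁻ x₂ in s, ∫⁻ x₃ in s, F (a • x₁ + b • x₂ + c • x₃) ∂μ ∂μ ∂μ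
      ≤ ∫⁻ x₁ in s, ∫⁻ x₂ in s, 3 ^ finrank ℝ E * ∫⁻ x, F x ∂μ ∂μ ∂μ := by
        gcongr with x₁ x₂
        exact setLIntegral_comp_add_smul_le μ F _ hc s
    _ = 3 ^ finrank ℝ E * (∫⁻ x, F x ∂μ) * μ s ^ 2 := by
        simp only [lintegral_const, Measure.restrict_apply_univ]
        ring

theorem lintegral_comp_smul_add_smul_add_smul_le {F : E → ℝ≥0∞} (hF : Measurable F) {a b c : ℝ}
    (habc : a + b + c = 1) (s : Set E) :
    ∫⁻ x₁ in s, ∫⁻ x₂ in s, ∫⁻ x₃ in s, F (a • x₁ + b • x₂ + c • x₃) ∂μ ∂μ ∂μ ≤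
      3 ^ finrank ℝ E * (∫⁻ x, F x ∂μ) * μ s ^ 2 := by
  have hmeas : Measurable fun x : E × E × E => F (a • x.1 + b • x.2.1 + c • x.2.2) :=
    hF.comp (by fun_prop)
  rcases (by contrapose! habc; linarith : 3⁻¹ ≤ a ∨ 3⁻¹ ≤ b ∨ 3⁻¹ ≤ c) with ha | hb | hc
  · calc _ = ∫⁻ y in s, ∫⁻ z in s, ∫⁻ x in s, F (a • x + b • y + c • z) ∂μ ∂μ ∂μ :=
          lintegral_lintegral_lintegral_rotate hmeas
      _ = ∫⁻ y in s, ∫⁻ z in s, ∫⁻ x in s, F (b • y + c • z + a • x) ∂μ ∂μ ∂μ := by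
          simp only [add_comm, add_assoc]
      _ ≤ _ := lintegral_comp_smul_add_smul_add_smul_le_of_right μ F b c ha s
  · calc _ = ∫⁻ y in s, ∫⁻ z in s, ∫⁻ x in s, F (c • x + a • y + b • z) ∂μ ∂μ ∂μ := by
          simp only [add_comm, add_left_comm, add_assoc]
      _ = ∫⁻ x in s, ∫⁻ y in s, ∫⁻ z in s, F (c • x + a • y + b • z) ∂μ ∂μ ∂μ :=
          (lintegral_lintegral_lintegral_rotate
            (g := fun q : E × E × E => F (c • q.1 + a • q.2.1 + b • q.2.2)) (by fun_prop)).symm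
      _ ≤ _ := lintegral_comp_smul_add_smul_add_smul_le_of_right μ F c a hb s
  · exact lintegral_comp_smul_add_smul_add_smul_le_of_right μ F a b hc s

end Haar

def unitTriangle : Set (Fin 2 → ℝ) := {p | 0 ≤ p 0 ∧ 0 ≤ p 1 ∧ p 0 + p 1 ≤ 1}

theorem convex_unitTriangle : Convex ℝ unitTriangle := by
  rintro p ⟨hp₀, hp₁, hp⟩ q ⟨hq₀, hq₁, hq⟩ a b ha hb hab
  refine ⟨?_, ?_, ?_⟩ <;> simp only [Pi.add_apply, Pi.smul_apply, smul_eq_mul] <;> nlinarith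

theorem volume_unitTriangle_le_one : volume unitTriangle ≤ 1 := by
  calc volume unitTriangle ≤ volume (Set.univ.pi fun _ : Fin 2 => Set.Icc (0 : ℝ) 1) := by
        refine measure_mono fun p ⟨hp₀, hp₁, hp⟩ i _ => ?_
        fin_cases i <;> constructor <;> simp <;> linarith
    _ = 1 := by rw [volume_pi_pi]; simp

section Triangle

variable {E : Type*} [NormedAddCommGroup E] [NormedSpace ℝ E]

def triangleParam (x₁ x₂ x₃ : E) (p : Fin 2 → ℝ) : E :=
  (1 - p 0 - p 1) • x₁ + p 0 • x₂ + p 1 • x₃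

@[fun_prop]
theorem continuous_triangleParam : Continuous fun q : E × E × E × (Fin 2 → ℝ) =>
    triangleParam q.1 q.2.1 q.2.2.1 q.2.2.2 := by
  unfold triangleParam; fun_prop

theorem lipschitzWith_triangleParam (x₁ x₂ x₃ : E) :
    LipschitzWith (‖x₂ - x₁‖ + ‖x₃ - x₁‖).toNNReal (triangleParam x₁ x₂ x₃) := by
  refine LipschitzWith.of_dist_le_mul fun p q => ?_
  have hdiff : triangleParam x₁ x₂ x₃ p - triangleParam x₁ x₂ x₃ q =
      (p 0 - q 0) • (x₂ - x₁) + (p 1 - q 1) • (x₃ - x₁) := by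
    unfold triangleParam; module
  have h₀ : |p 0 - q 0| ≤ dist p q := by simpa [Real.dist_eq] using dist_le_pi_dist p q 0
  have h₁ : |p 1 - q 1| ≤ dist p q := by simpa [Real.dist_eq] using dist_le_pi_dist p q 1
  rw [dist_eq_norm, hdiff]
  calc ‖(p 0 - q 0) • (x₂ - x₁) + (p 1 - q 1) • (x₃ - x₁)‖
      ≤ |p 0 - q 0| * ‖x₂ - x₁‖ + |p 1 - q 1| * ‖x₃ - x₁‖ := by
        simpa [norm_smul] using norm_add_le ((p 0 - q 0) • (x₂ - x₁)) ((p 1 - q 1) • (x₃ - x₁))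
    _ ≤ dist p q * ‖x₂ - x₁‖ + dist p q * ‖x₃ - x₁‖ := by gcongr
    _ = (‖x₂ - x₁‖ + ‖x₃ - x₁‖).toNNReal * dist p q := by
        rw [Real.coe_toNNReal _ (by positivity)]; ring

theorem convexHull_subset_triangleParam_image (x₁ x₂ x₃ : E) :
    convexHull ℝ {x₁, x₂, x₃} ⊆ triangleParam x₁ x₂ x₃ '' unitTriangle := by
  refine convexHull_min ?_ ?_
  · rintro z (rfl | rfl | rfl)
    · exact ⟨0, by simp [unitTriangle], by simp [triangleParam]⟩
    · exact ⟨![1, 0], by simp [unitTriangle], by simp [triangleParam]⟩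
    · exact ⟨![0, 1], by simp [unitTriangle], by simp [triangleParam]⟩
  · rintro _ ⟨p, hp, rfl⟩ _ ⟨q, hq, rfl⟩ a b ha hb hab
    refine ⟨a • p + b • q, convex_unitTriangle hp hq ha hb hab, ?_⟩
    simp only [triangleParam, Pi.add_apply, Pi.smul_apply, smul_eq_mul]
    rw [eq_sub_of_add_eq hab]
    module

variable [MeasurableSpace E] [BorelSpace E]

theorem lintegral_convexHull_le {F : E → ℝ≥0∞} (hF : Measurable F) (x₁ x₂ x₃ : E) :
    ∫⁻ z in convexHull ℝ {x₁, x₂, x₃}, F z ∂μH[2] ≤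
      ENNReal.ofReal (‖x₂ - x₁‖ + ‖x₃ - x₁‖) ^ 2 *
        ∫⁻ p in unitTriangle, F (triangleParam x₁ x₂ x₃ p) := by
  set K := ENNReal.ofReal (‖x₂ - x₁‖ + ‖x₃ - x₁‖)
  set φ := triangleParam x₁ x₂ x₃
  have hφ : Measurable φ := (lipschitzWith_triangleParam x₁ x₂ x₃).continuous.measurable
  have hμH : (μH[2] : Measure (Fin 2 → ℝ)) = volume := by
    simpa using hausdorffMeasure_pi_real (ι := Fin 2)
  have hle : (μH[2] : Measure E).restrict (convexHull ℝ {x₁, x₂, x₃}) ≤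
      K ^ 2 • (volume.restrict unitTriangle).map φ := by
    refine Measure.le_iff.2 fun s hs => ?_
    rw [Measure.restrict_apply hs, Measure.smul_apply, Measure.map_apply hφ hs,
      Measure.restrict_apply (hφ hs), smul_eq_mul, ← hμH]
    calc μH[2] (s ∩ convexHull ℝ {x₁, x₂, x₃}) ≤ μH[2] (φ '' (φ ⁻¹' s ∩ unitTriangle)) := by
          refine measure_mono fun z ⟨hzs, hz⟩ => ?_
          obtain ⟨p, hp, rfl⟩ := convexHull_subset_triangleParam_image x₁ x₂ x₃ hz
          exact ⟨p, ⟨hzs, hp⟩, rfl⟩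
      _ ≤ K ^ (2 : ℝ) * μH[2] (φ ⁻¹' s ∩ unitTriangle) :=
          (lipschitzWith_triangleParam x₁ x₂ x₃).hausdorffMeasure_image_le (by norm_num) _
      _ = K ^ 2 * μH[2] (φ ⁻¹' s ∩ unitTriangle) := by norm_cast
  calc ∫⁻ z in convexHull ℝ {x₁, x₂, x₃}, F z ∂μH[2]
      ≤ ∫⁻ z, F z ∂(K ^ 2 • (volume.restrict unitTriangle).map φ) := lintegral_mono' hle le_rfl
    _ = K ^ 2 * ∫⁻ p in unitTriangle, F (φ p) := by
        rw [lintegral_smul_measure, lintegral_map hF hφ, smul_eq_mul]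

variable [FiniteDimensional ℝ E] (μ : Measure E) [μ.IsAddHaarMeasure]

theorem lintegral_ball_lintegral_convexHull_le {F : E → ℝ≥0∞} (hF : Measurable F) (c : E)
    (R : ℝ) :
    ∫⁻ x₁ in ball c R, ∫⁻ x₂ in ball c R, ∫⁻ x₃ in ball c R,
        ∫⁻ z in convexHull ℝ {x₁, x₂, x₃}, F z ∂μH[2] ∂μ ∂μ ∂μ ≤
      ENNReal.ofReal (4 * R) ^ 2 * (3 ^ finrank ℝ E * (∫⁻ x, F x ∂μ) * μ (ball c R) ^ 2) := by
  set B := ball c R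
  have hside : ∀ x₁ ∈ B, ∀ x₂ ∈ B, ∀ x₃ ∈ B, ‖x₂ - x₁‖ + ‖x₃ - x₁‖ ≤ 4 * R := by
    intro x₁ h₁ x₂ h₂ x₃ h₃
    rw [mem_ball] at h₁ h₂ h₃
    have := dist_triangle_right x₂ x₁ c
    have := dist_triangle_right x₃ x₁ c
    rw [← dist_eq_norm, ← dist_eq_norm]
    linarith
  have hG : Measurable fun q : E × E × E × (Fin 2 → ℝ) =>
      F (triangleParam q.1 q.2.1 q.2.2.1 q.2.2.2) := hF.comp (by fun_prop)
  calc ∫⁻ x₁ in B, ∫⁻ x₂ in B, ∫⁻ x₃ in B,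
        ∫⁻ z in convexHull ℝ {x₁, x₂, x₃}, F z ∂μH[2] ∂μ ∂μ ∂μ
      ≤ ∫⁻ x₁ in B, ∫⁻ x₂ in B, ∫⁻ x₃ in B, ENNReal.ofReal (4 * R) ^ 2 *
          ∫⁻ p in unitTriangle, F (triangleParam x₁ x₂ x₃ p) ∂volume ∂μ ∂μ ∂μ := by
        refine setLIntegral_mono' measurableSet_ball fun x₁ h₁ => ?_
        refine setLIntegral_mono' measurableSet_ball fun x₂ h₂ => ?_
        refine setLIntegral_mono' measurableSet_ball fun x₃ h₃ => ?_
        refine (lintegral_convexHull_le hF x₁ x₂ x₃).trans ?_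
        gcongr
        exact hside x₁ h₁ x₂ h₂ x₃ h₃
    _ = ENNReal.ofReal (4 * R) ^ 2 * ∫⁻ p in unitTriangle, ∫⁻ x₁ in B, ∫⁻ x₂ in B, ∫⁻ x₃ in B,
          F (triangleParam x₁ x₂ x₃ p) ∂μ ∂μ ∂μ ∂volume := by
        simp_rw [lintegral_const_mul' _ _ (pow_ne_top ofReal_ne_top)]
        rw [lintegral_lintegral_lintegral_lintegral_swap hG]
    _ ≤ ENNReal.ofReal (4 * R) ^ 2 * ∫⁻ p in unitTriangle,
          3 ^ finrank ℝ E * (∫⁻ x, F x ∂μ) * μ B ^ 2 := by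
        gcongr with p
        exact lintegral_comp_smul_add_smul_add_smul_le μ hF (by ring) B
    _ ≤ ENNReal.ofReal (4 * R) ^ 2 * (3 ^ finrank ℝ E * (∫⁻ x, F x ∂μ) * μ B ^ 2) := by
        rw [setLIntegral_const]
        exact mul_le_mul_right (mul_le_of_le_one_right' volume_unitTriangle_le_one) _

end Triangle

theorem cube_subset_closedBall {c : E3} {l : ℝ} (hl : 0 ≤ l) : cube c l ⊆ closedBall c l := by
  intro x hx
  have hcoord : ∀ i, dist (x i) (c i) ^ 2 ≤ (l / 2) ^ 2 := fun i =>
    pow_le_pow_left₀ dist_nonneg (hx i) 2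
  rw [mem_closedBall, EuclideanSpace.dist_eq, ← Real.sqrt_sq hl]
  refine Real.sqrt_le_sqrt ?_
  simp only [Fin.sum_univ_three] at hcoord ⊢
  nlinarith [hcoord 0, hcoord 1, hcoord 2]

theorem volume_ball_ten_mul (c : E3) {ℓ : ℝ} (hℓ : 0 ≤ ℓ) :
    volume (ball c (10 * ℓ)) = ENNReal.ofReal (4000 * π / 3 * ℓ ^ 3) := by
  rw [EuclideanSpace.volume_ball_fin_three, ← ofReal_pow (by positivity),
    ← ofReal_mul (by positivity)]
  ring_nf

theorem ofReal_sq_mul_volume_ball_sq (c : E3) {ℓ : ℝ} (hℓ : 0 < ℓ) (I : ℝ≥0∞) :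
    ENNReal.ofReal (4 * (10 * ℓ)) ^ 2 * (3 ^ 3 * I * volume (ball c (10 * ℓ)) ^ 2) =
      ENNReal.ofReal (43200 * (4000 * π / 3) ^ 3 * ℓ ^ 11) *
        ((volume (ball c (10 * ℓ)))⁻¹ * I) := by
  rw [volume_ball_ten_mul c hℓ.le]
  calc _ = ENNReal.ofReal ((4 * (10 * ℓ)) ^ 2 * 3 ^ 3 * (4000 * π / 3 * ℓ ^ 3) ^ 2) * I := by
        rw [ofReal_mul (p := (4 * (10 * ℓ)) ^ 2 * 3 ^ 3) (by positivity),
          ofReal_mul (p := (4 * (10 * ℓ)) ^ 2) (by positivity),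
          ofReal_pow (p := 4 * (10 * ℓ)) (by positivity),
          ofReal_pow (p := 4000 * π / 3 * ℓ ^ 3) (by positivity), ofReal_pow (by norm_num),
          ofReal_ofNat]
        ring
    _ = ENNReal.ofReal (43200 * (4000 * π / 3) ^ 3 * ℓ ^ 11 / (4000 * π / 3 * ℓ ^ 3)) * I := by
        congr 2
        field_simp
        ring
    _ = _ := by rw [ofReal_div_of_pos (by positivity), div_eq_mul_inv, mul_assoc]

theorem ofReal_mul_pow_mul_inv_volume_ball_le (c : E3) {ℓ C : ℝ} (hℓ : 0 < ℓ) (hC : 0 ≤ C)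
    (I : ℝ≥0∞) :
    ENNReal.ofReal (C * ℓ ^ 11) * ((volume (ball c (10 * ℓ)))⁻¹ * I) ≤
      ENNReal.ofReal (C * ℓ ^ 8) * I := by
  rw [volume_ball_ten_mul c hℓ.le, ← mul_assoc, ← div_eq_mul_inv,
    ← ofReal_div_of_pos (by positivity)]
  gcongr
  rw [div_le_iff₀ (by positivity)]
  have : 1 ≤ 4000 * π / 3 := by nlinarith [pi_gt_three]
  have : 0 ≤ C * ℓ ^ 11 := by positivity
  nlinarith

/-- **Scaled version of Lemma 3.8 (b).** For a cube `Q₁` of side `ℓ` centered at `c`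
and comparable cubes `Q₂, Q₃ ⊂ B_{10ℓ}(c)`, the iterated triangle integral of `|v|` is
bounded by `C ℓ⁸ ∫_{B_{10ℓ}(c)} |v| = C ℓ¹¹ ⨍_{B_{10ℓ}(c)} |v|`. -/
theorem triangle_integral_bound_scaled :
    ∃ C : ℝ, 0 < C ∧
      ∀ (ℓ : ℝ), 0 < ℓ → ∀ (c : E3) (c₂ : E3) (l₂ : ℝ) (c₃ : E3) (l₃ : ℝ),
        ℓ / 4 ≤ l₂ → l₂ ≤ 4 * ℓ → cube c₂ l₂ ⊆ ball c (10 * ℓ) →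
        ℓ / 4 ≤ l₃ → l₃ ≤ 4 * ℓ → cube c₃ l₃ ⊆ ball c (10 * ℓ) →
        ∀ v : E3 → ℝ, IntegrableOn v (ball c (10 * ℓ)) →
          (∀ x ∉ ball c (10 * ℓ), v x = 0) →
          (∫⁻ x₁ in cube c ℓ, ∫⁻ x₂ in cube c₂ l₂, ∫⁻ x₃ in cube c₃ l₃,
              ∫⁻ z in convexHull ℝ {x₁, x₂, x₃}, ENNReal.ofReal |v z| ∂(μH[2])
            ≤ ENNReal.ofReal (C * ℓ ^ 8) *
                ∫⁻ z in ball c (10 * ℓ), ENNReal.ofReal |v z|) ∧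
          (∫⁻ x₁ in cube c ℓ, ∫⁻ x₂ in cube c₂ l₂, ∫⁻ x₃ in cube c₃ l₃,
              ∫⁻ z in convexHull ℝ {x₁, x₂, x₃}, ENNReal.ofReal |v z| ∂(μH[2])
            ≤ ENNReal.ofReal (C * ℓ ^ 11) *
                ((volume (ball c (10 * ℓ)))⁻¹ *
                  ∫⁻ z in ball c (10 * ℓ), ENNReal.ofReal |v z|)) := by
  -- `C ℓ¹¹ = (4 · 10ℓ)² · 3³ · |B_{10ℓ}(c)|³`, since `|B_{10ℓ}(c)| = (4000π/3) ℓ³`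
  refine ⟨43200 * (4000 * π / 3) ^ 3, by positivity, ?_⟩
  intro ℓ hℓ c c₂ l₂ c₃ l₃ _ _ h₂ _ _ h₃ v hv hv₀
  set B := ball c (10 * ℓ)
  obtain ⟨F, hF, hvF, hI⟩ := IntegrableOn.exists_measurable_ge_lintegral_eq hv hv₀
  have h₁ : cube c ℓ ⊆ B :=
    (cube_subset_closedBall hℓ.le).trans (closedBall_subset_ball (by linarith))
  have key := calc
    ∫⁻ x₁ in cube c ℓ, ∫⁻ x₂ in cube c₂ l₂, ∫⁻ x₃ in cube c₃ l₃,
        ∫⁻ z in convexHull ℝ {x₁, x₂, x₃}, ENNReal.ofReal |v z| ∂(μH[2])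
      ≤ ∫⁻ x₁ in B, ∫⁻ x₂ in B, ∫⁻ x₃ in B, ∫⁻ z in convexHull ℝ {x₁, x₂, x₃}, F z ∂μH[2] :=
        lintegral_mono' (Measure.restrict_mono h₁ le_rfl) fun _ =>
          lintegral_mono' (Measure.restrict_mono h₂ le_rfl) fun _ =>
            lintegral_mono' (Measure.restrict_mono h₃ le_rfl) fun _ => lintegral_mono hvF
    _ ≤ ENNReal.ofReal (4 * (10 * ℓ)) ^ 2 * (3 ^ 3 * (∫⁻ z, F z) * volume B ^ 2) := by
        simpa only [finrank_euclideanSpace, Fintype.card_fin] using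
          lintegral_ball_lintegral_convexHull_le volume hF c (10 * ℓ)
  rw [ofReal_sq_mul_volume_ball_sq c hℓ, hI] at key
  exact ⟨key.trans (ofReal_mul_pow_mul_inv_volume_ball_le c hℓ (by positivity) _), key⟩
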